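/- The set of solutions (z₁, z₂) ∈ ℝ² with z₁ > 0 and z₂ > 0 of the system 28(z₁ − 1)z₁(z₁ − 2z₂ + 1) = 0 and (14/3)z₂(z₁² − 12z₁(z₂ − 1) + 5z₂² − 5) = 0 is exactly {(3/5, 4/5), (5/3, 4/3)}. (These two points are the singularities at infinity of the normalized Ricci flow on the generalized Wallach space E₆/SU(4)×SU(2)×SU(2)×U(1), corresponding to its two invariant Einstein metrics.) -/
import Mathlib


/-- First polynomial of the compactified normalized Ricci flow at infinity for the
generalized Wallach space E₆/SU(4)×SU(2)×SU(2)×U(1). -/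
noncomputable def u₁ (z₁ z₂ : ℝ) : ℝ :=
  28 * (z₁ - 1) * z₁ * (z₁ - 2 * z₂ + 1)

/-- Second polynomial of the compactified normalized Ricci flow at infinity for the
generalized Wallach space E₆/SU(4)×SU(2)×SU(2)×U(1). -/
noncomputable def u₂ (z₁ z₂ : ℝ) : ℝ :=
  (14 / 3) * z₂ * (z₁ ^ 2 - 12 * z₁ * (z₂ - 1) + 5 * z₂ ^ 2 - 5)

theorem wallach_E6_SU4_singularities :
    {p : ℝ × ℝ | 0 < p.1 ∧ 0 < p.2 ∧ u₁ p.1 p.2 = 0 ∧ u₂ p.1 p.2 = 0} =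
      {((3 : ℝ) / 5, (4 : ℝ) / 5), ((5 : ℝ) / 3, (4 : ℝ) / 3)} := by
  ext ⟨x, y⟩
  simp only [Set.mem_setOf_eq, Set.mem_insert_iff, Set.mem_singleton_iff, Prod.mk.injEq, u₁, u₂]
  constructor
  · rintro ⟨hx, hy, h1, h2⟩
    have h2' : x ^ 2 - 12 * x * (y - 1) + 5 * y ^ 2 - 5 = 0 := by
      have hy' : (14 / 3 : ℝ) * y ≠ 0 := by positivity
      have := mul_eq_zero.mp (by linarith [h2] : (14 / 3 : ℝ) * y *
        (x ^ 2 - 12 * x * (y - 1) + 5 * y ^ 2 - 5) = 0)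
      tauto
    rcases mul_eq_zero.mp h1 with h | h
    · rcases mul_eq_zero.mp h with h | h
      · -- x = 1 case (or 28 = 0, impossible)
        rcases mul_eq_zero.mp h with h | h
        · norm_num at h
        · -- x = 1: 5y² - 12y + 8 = 0, impossible
          have hx1 : x = 1 := by linarith
          exfalso
          nlinarith [sq_nonneg (5 * y - 6), h2', hx1]
      · exfalso; linarith
    · -- x = 2y - 1
      have hx2 : x = 2 * y - 1 := by linarith
      have hfac : (3 * y - 4) * (5 * y - 4) = 0 := by nlinarith [h2', hx2]
      rcases mul_eq_zero.mp hfac with h | h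
      · right; constructor <;> [skip; linarith]
        rw [hx2]; linarith
      · left; constructor <;> [skip; linarith]
        rw [hx2]; linarith
  · rintro (⟨hx, hy⟩ | ⟨hx, hy⟩) <;> subst hx <;> subst hy <;> norm_num
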